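/- Let F be a CIF(k,t) and suppose F^⊤ is partitioned into subfamilies C₁,…,Cₙ such that every set in Cᵢ is a blocking set of F^⊤ ∖ Cᵢ for each i. Let A₁,…,Aₙ be maximal intersecting families of (k−t)-sets, each with point set disjoint from that of F (and from each other where combined). Then F ∪ (⨆ᵢ Aᵢ ⊛ Cᵢ) is a maximal intersecting family of k-sets. -/
import Mathlib


open Finset

variable {α : Type*} {β : Type*}

/-- `C` is a blocking set of the family `F`: it meets every block of `F`. -/
def IsBlocking (F : Set (Finset α)) (C : Finset α) : Prop :=
  ∀ B ∈ F, ∃ x ∈ B, x ∈ C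

/-- The transversal number `τ(F)`: the minimum size of a (finite) blocking set. -/
noncomputable def tau (F : Set (Finset α)) : ℕ :=
  sInf {n | ∃ C : Finset α, C.card = n ∧ IsBlocking F C}

/-- The family `F^⊤` of transversals, i.e. minimum-size blocking sets of `F`. -/
noncomputable def transversals (F : Set (Finset α)) : Set (Finset α) :=
  {C | IsBlocking F C ∧ C.card = tau F}

/-- A family is intersecting if any two of its blocks meet. -/
def FamIntersecting (F : Set (Finset α)) : Prop :=
  ∀ A ∈ F, ∀ B ∈ F, ∃ x ∈ A, x ∈ B

/-- A family is `k`-uniform if all its blocks have size `k`. -/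
def FamUniform (F : Set (Finset α)) (k : ℕ) : Prop :=
  ∀ B ∈ F, B.card = k

/-- `F` has a finite blocking set (τ(F) < ∞). -/
def HasBlocking (F : Set (Finset α)) : Prop :=
  ∃ C : Finset α, IsBlocking F C

/-- Maximal intersecting family of `k`-sets: uniform, τ < ∞ and `F = F^⊤`. -/
noncomputable def MIF (F : Set (Finset α)) (k : ℕ) : Prop :=
  FamUniform F k ∧ HasBlocking F ∧ F = transversals F

/-- Closed intersecting family `CIF(k,t)`: a `k`-uniform intersecting family with
`τ(F) = t ≤ k - 1` and `F = (F ∪ F^⊤)^⊤`. -/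
noncomputable def CIF (F : Set (Finset α)) (k t : ℕ) : Prop :=
  FamUniform F k ∧ FamIntersecting F ∧ tau F = t ∧ t ≤ k - 1 ∧
    F = transversals (F ∪ transversals F)

/-- The point set of a family. -/
def pts (F : Set (Finset α)) : Set α := ⋃ B ∈ F, (B : Set α)

/-- `G ⊛ H`: all unions `A ∪ B` with `A ∈ G`, `B ∈ H` (for point-disjoint families
these are disjoint unions). -/
def star [DecidableEq α] (G H : Set (Finset α)) : Set (Finset α) :=
  {C | ∃ A ∈ G, ∃ B ∈ H, C = A ∪ B}

/-- Any blocking set witnesses an upper bound on `tau`. -/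
lemma tau_le_card {F : Set (Finset α)} {S : Finset α} (hS : IsBlocking F S) :
    tau F ≤ S.card :=
  Nat.sInf_le ⟨S, rfl, hS⟩

/-- Membership in the point set. -/
lemma mem_pts {F : Set (Finset α)} {B : Finset α} {x : α} (hB : B ∈ F) (hx : x ∈ B) :
    x ∈ pts F :=
  Set.mem_biUnion hB hx

/-- If `F` has a blocking set, it has a minimum one. -/
lemma exists_transversal {F : Set (Finset α)} (h : HasBlocking F) :
    ∃ T, T ∈ transversals F := by
  obtain ⟨C, hC⟩ := h
  have hmem : tau F ∈ {n | ∃ C : Finset α, C.card = n ∧ IsBlocking F C} :=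
    Nat.sInf_mem ⟨C.card, C, rfl, hC⟩
  obtain ⟨T, hT1, hT2⟩ := hmem
  exact ⟨T, hT2, hT1⟩

/-- A minimum blocking set only uses points of the family. -/
lemma transversal_subset_pts {F : Set (Finset α)} {T : Finset α} [DecidableEq α]
    (hT : T ∈ transversals F) : ↑T ⊆ pts F := by
  intro x hx
  have hxT : x ∈ T := hx
  by_contra hxp
  have hb : IsBlocking F (T.erase x) := by
    intro B hB
    obtain ⟨y, hyB, hyT⟩ := hT.1 B hB
    refine ⟨y, hyB, Finset.mem_erase.2 ⟨?_, hyT⟩⟩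
    rintro rfl
    exact hxp (mem_pts hB hyB)
  have hle := tau_le_card hb
  rw [Finset.card_erase_of_mem hxT, hT.2] at hle
  have hpos : 0 < tau F := by
    rw [← hT.2]; exact Finset.card_pos.2 ⟨x, hxT⟩
  omega

theorem stmt_7 [DecidableEq α] (F : Set (Finset α)) (k t n : ℕ)
    (hF : CIF F k t) (C A : Fin n → Set (Finset α))
    (hcover : transversals F = ⋃ i, C i)
    (hdisjC : Pairwise fun i j => Disjoint (C i) (C j))
    (hblock : ∀ i, ∀ T ∈ C i, IsBlocking (transversals F \ C i) T)
    (hA : ∀ i, MIF (A i) (k - t))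
    (hAF : ∀ i, Disjoint (pts (A i)) (pts F))
    (hAA : Pairwise fun i j => Disjoint (pts (A i)) (pts (A j))) :
    MIF (F ∪ ⋃ i, star (A i) (C i)) k := by
  classical
  obtain ⟨hFu, hFi, hτ, htk1, hclosed⟩ := hF
  have htk : t ≤ k := le_trans htk1 (Nat.sub_le k 1)
  -- Every `A i` is nonempty
  have hAne : ∀ i, (A i).Nonempty := by
    intro i
    obtain ⟨hAu, hAb, hAtr⟩ := hA i
    by_contra h
    rw [Set.not_nonempty_iff_eq_empty] at h
    have hbl : IsBlocking (A i) (∅ : Finset α) := by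
      intro B hB; rw [h] at hB; exact absurd hB (Set.notMem_empty B)
    have h0 : tau (A i) = 0 := by
      have := tau_le_card hbl; simpa using this
    have hmem : (∅ : Finset α) ∈ transversals (A i) := ⟨hbl, by simp [h0]⟩
    rw [← hAtr, h] at hmem
    exact hmem
  -- `tau (A i) = k - t`
  have htauA : ∀ i, tau (A i) = k - t := by
    intro i
    obtain ⟨A', hA'⟩ := hAne i
    obtain ⟨hAu, hAb, hAtr⟩ := hA i
    have hmem : A' ∈ transversals (A i) := by rw [← hAtr]; exact hA'
    rw [← hmem.2, hAu A' hA']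
  -- `F` has a blocking set
  have hHBF : HasBlocking F := by
    rcases Set.eq_empty_or_nonempty F with hFe | ⟨B, hB⟩
    · exact ⟨∅, fun B hB => by rw [hFe] at hB; exact absurd hB (Set.notMem_empty B)⟩
    · exact ⟨B, fun B' hB' => hFi B' hB' B hB⟩
  obtain ⟨T₀, hT₀⟩ := exists_transversal hHBF
  have hT₀' : T₀ ∈ ⋃ i, C i := by rw [← hcover]; exact hT₀
  obtain ⟨i₀, hTi₀⟩ := Set.mem_iUnion.1 hT₀'
  have hCsub : ∀ i, C i ⊆ transversals F := by
    intro i; rw [hcover]; exact Set.subset_iUnion C i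
  have hTprop : ∀ i, ∀ T ∈ C i, IsBlocking F T ∧ T.card = t ∧ ↑T ⊆ pts F := by
    intro i T hT
    have h1 := hCsub i hT
    exact ⟨h1.1, by rw [h1.2, hτ], transversal_subset_pts h1⟩
  set G := F ∪ ⋃ i, star (A i) (C i) with hGdef
  -- cardinality of star elements
  have hstar : ∀ i, ∀ A' ∈ A i, ∀ T ∈ C i, Disjoint A' T ∧ (A' ∪ T).card = k := by
    intro i A' hA' T hT
    have hd : Disjoint A' T := by
      refine Finset.disjoint_left.2 fun x hxA hxT => ?_
      exact Set.disjoint_left.1 (hAF i) (mem_pts hA' hxA) ((hTprop i T hT).2.2 hxT)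
    refine ⟨hd, ?_⟩
    rw [Finset.card_union_of_disjoint hd, (hA i).1 A' hA', (hTprop i T hT).2.1]
    omega
  -- uniformity
  have hGu : FamUniform G k := by
    rintro B (hB | hB)
    · exact hFu B hB
    · obtain ⟨j, hj⟩ := Set.mem_iUnion.1 hB
      obtain ⟨A', hA', T, hT, rfl⟩ := hj
      exact (hstar j A' hA' T hT).2
  -- intersecting
  have hGi : FamIntersecting G := by
    rintro B (hB | hB) D (hD | hD)
    · exact hFi B hB D hD
    · obtain ⟨j, hj⟩ := Set.mem_iUnion.1 hD
      obtain ⟨A', hA', T, hT, rfl⟩ := hj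
      obtain ⟨x, hxB, hxT⟩ := (hTprop j T hT).1 B hB
      exact ⟨x, hxB, Finset.mem_union_right _ hxT⟩
    · obtain ⟨j, hj⟩ := Set.mem_iUnion.1 hB
      obtain ⟨A', hA', T, hT, rfl⟩ := hj
      obtain ⟨x, hxD, hxT⟩ := (hTprop j T hT).1 D hD
      exact ⟨x, Finset.mem_union_right _ hxT, hxD⟩
    · obtain ⟨i, hi⟩ := Set.mem_iUnion.1 hB
      obtain ⟨A1, hA1, T1, hT1, rfl⟩ := hi
      obtain ⟨j, hj⟩ := Set.mem_iUnion.1 hD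
      obtain ⟨A2, hA2, T2, hT2, rfl⟩ := hj
      by_cases hij : i = j
      · subst hij
        have hmem : A1 ∈ transversals (A i) := by rw [← (hA i).2.2]; exact hA1
        obtain ⟨x, hx2, hx1⟩ := hmem.1 A2 hA2
        exact ⟨x, Finset.mem_union_left _ hx1, Finset.mem_union_left _ hx2⟩
      · have hT2' : T2 ∈ transversals F \ C i :=
          ⟨hCsub j hT2, fun h => Set.disjoint_left.1 (hdisjC hij) h hT2⟩
        obtain ⟨x, hx2, hx1⟩ := hblock i T1 hT1 T2 hT2'
        exact ⟨x, Finset.mem_union_right _ hx1, Finset.mem_union_right _ hx2⟩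
  -- a concrete member of G
  obtain ⟨A₀, hA₀⟩ := hAne i₀
  have hB₀G : A₀ ∪ T₀ ∈ G := Or.inr (Set.mem_iUnion.2 ⟨i₀, A₀, hA₀, T₀, hTi₀, rfl⟩)
  have hGb : HasBlocking G := ⟨A₀ ∪ T₀, fun B hB => hGi B hB _ hB₀G⟩
  -- tau of the closure is k when F is nonempty
  have htauU : ∀ B₀ ∈ F, tau (F ∪ transversals F) = k := by
    intro B₀ hB₀'
    have hmem : B₀ ∈ transversals (F ∪ transversals F) := by
      rw [← hclosed]; exact hB₀'
    rw [← hmem.2, hFu B₀ hB₀']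
  -- key lemma about blocking sets of G
  have hkey : ∀ S : Finset α, IsBlocking G S → k ≤ S.card ∧ (S.card = k → S ∈ G) := by
    intro S hS
    have hSF : IsBlocking F S := fun B hB => hS B (Or.inl hB)
    by_cases hall : ∀ i, IsBlocking (C i) S
    · have hSU : IsBlocking (F ∪ transversals F) S := by
        rintro B (hB | hB)
        · exact hSF B hB
        · rw [hcover] at hB
          obtain ⟨i, hi⟩ := Set.mem_iUnion.1 hB
          exact hall i B hi
      rcases Set.eq_empty_or_nonempty F with hFe | ⟨B₀', hB₀'⟩
      · exfalso
        have ht0 : t = 0 := by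
          rw [← hτ]
          have hbl : IsBlocking F (∅ : Finset α) := by
            intro B hB; rw [hFe] at hB; exact absurd hB (Set.notMem_empty B)
          have := tau_le_card hbl; simpa using this
        have hT₀e : T₀ = ∅ := Finset.card_eq_zero.1 (by rw [hT₀.2, hτ, ht0])
        obtain ⟨x, hx, -⟩ := hall i₀ T₀ hTi₀
        rw [hT₀e] at hx
        exact absurd hx (Finset.notMem_empty x)
      · have hk := htauU B₀' hB₀'
        constructor
        · calc k = tau (F ∪ transversals F) := hk.symm
            _ ≤ S.card := tau_le_card hSU
        · intro hcard
          left
          rw [hclosed]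
          exact ⟨hSU, by rw [hcard, hk]⟩
    · obtain ⟨i, hi⟩ := not_forall.1 hall
      rw [IsBlocking] at hi
      push_neg at hi
      obtain ⟨T, hT, hTS⟩ := hi
      -- hTS : ∀ x ∈ T, x ∉ S
      have hSA : IsBlocking (A i) S := by
        intro A' hA'
        have hmem : A' ∪ T ∈ G := Or.inr (Set.mem_iUnion.2 ⟨i, A', hA', T, hT, rfl⟩)
        obtain ⟨x, hx, hxS⟩ := hS _ hmem
        rcases Finset.mem_union.1 hx with h | h
        · exact ⟨x, h, hxS⟩
        · exact absurd hxS (hTS x h)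
      set SA := S.filter (· ∈ pts (A i)) with hSAdef
      set SF := S.filter (· ∈ pts F) with hSFdef
      have hSAb : IsBlocking (A i) SA := by
        intro A' hA'
        obtain ⟨x, hx, hxS⟩ := hSA A' hA'
        exact ⟨x, hx, Finset.mem_filter.2 ⟨hxS, mem_pts hA' hx⟩⟩
      have hSFb : IsBlocking F SF := by
        intro B hB
        obtain ⟨x, hx, hxS⟩ := hSF B hB
        exact ⟨x, hx, Finset.mem_filter.2 ⟨hxS, mem_pts hB hx⟩⟩
      have hcA : k - t ≤ SA.card := by rw [← htauA i]; exact tau_le_card hSAb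
      have hcF : t ≤ SF.card := by rw [← hτ]; exact tau_le_card hSFb
      have hdisj : Disjoint SA SF := by
        refine Finset.disjoint_left.2 fun x hx1 hx2 => ?_
        exact Set.disjoint_left.1 (hAF i) (Finset.mem_filter.1 hx1).2
          (Finset.mem_filter.1 hx2).2
      have hsub : SA ∪ SF ⊆ S :=
        Finset.union_subset (Finset.filter_subset _ _) (Finset.filter_subset _ _)
      have hcard_le : SA.card + SF.card ≤ S.card := by
        rw [← Finset.card_union_of_disjoint hdisj]
        exact Finset.card_le_card hsub
      constructor
      · omega
      · intro hScard
        have h1 : SA.card = k - t := by omega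
        have h2 : SF.card = t := by omega
        have hSAm : SA ∈ A i := by
          rw [(hA i).2.2]
          exact ⟨hSAb, by rw [h1, htauA i]⟩
        have hSFm : SF ∈ transversals F := ⟨hSFb, by rw [h2, hτ]⟩
        have hSFU : SF ∈ ⋃ j, C j := by rw [← hcover]; exact hSFm
        obtain ⟨j, hj⟩ := Set.mem_iUnion.1 hSFU
        have hji : j = i := by
          by_contra hne
          have hSF' : SF ∈ transversals F \ C i :=
            ⟨hSFm, fun h => Set.disjoint_left.1 (hdisjC hne) hj h⟩
          obtain ⟨x, hx, hxT⟩ := hblock i T hT SF hSF'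
          exact hTS x hxT (Finset.mem_filter.1 hx).1
        subst hji
        have hSeq : S = SA ∪ SF := by
          refine (Finset.eq_of_subset_of_card_le hsub ?_).symm
          rw [hScard, Finset.card_union_of_disjoint hdisj, h1, h2]
          omega
        exact Or.inr (Set.mem_iUnion.2 ⟨j, SA, hSAm, SF, hj, hSeq⟩)
  -- tau G = k
  have htauG : tau G = k := by
    have h1 : tau G ≤ k := by
      have hle := tau_le_card (fun B hB => hGi B hB _ hB₀G)
      rwa [hGu _ hB₀G] at hle
    have h2 : tau G ∈ {m | ∃ Cb : Finset α, Cb.card = m ∧ IsBlocking G Cb} := by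
      obtain ⟨Cb, hCb⟩ := hGb
      exact Nat.sInf_mem ⟨Cb.card, Cb, rfl, hCb⟩
    obtain ⟨S, hScard, hSb⟩ := h2
    have := (hkey S hSb).1
    omega
  refine ⟨hGu, hGb, Set.eq_of_subset_of_subset ?_ ?_⟩
  · intro B hB
    exact ⟨fun D hD => hGi D hD B hB, by rw [hGu B hB, htauG]⟩
  · intro S hSmem
    exact (hkey S hSmem.1).2 (by rw [hSmem.2, htauG])
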